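/- arXiv:1709.07375 — 3 statements merged into one kernel-verified Lean document; each statement's English description precedes it below -/
import Mathlib

section
/- Let 0 < α < 1/2 and define g: ℝ → ℝ by g(u) = ∫₀^u (1 + 2α|s|^{2(2α-1)})^{1/2} ds for u ≥ 0 and g(u) = -g(-u) for u < 0. Then g is an odd, strictly increasing bijection from ℝ to ℝ, and its inverse h = g⁻¹ is continuously differentiable on ℝ with h'(t) = (1 + 2α|h(t)|^{2(2α-1)})^{-1/2} for t ≠ 0. -/
open Real Filter MeasureTheory Set

/-- The change-of-variable function `g` (inverse of `h`), with `2κα² = 2α`. -/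
noncomputable def gfun (α : ℝ) (u : ℝ) : ℝ :=
  ∫ s in (0:ℝ)..u, Real.sqrt (1 + 2*α * |s| ^ (2*(2*α-1)))

section Aux
variable {α : ℝ}

/-- The integrand of `gfun`. -/
noncomputable def ffun (α : ℝ) (s : ℝ) : ℝ := Real.sqrt (1 + 2*α * |s| ^ (2*(2*α-1)))

lemma gfun_eq (α u : ℝ) : gfun α u = ∫ s in (0:ℝ)..u, ffun α s := rfl

lemma ffun_one_le (hα0 : 0 < α) (s : ℝ) : 1 ≤ ffun α s := by
  rw [ffun, Real.one_le_sqrt]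
  nlinarith [Real.rpow_nonneg (abs_nonneg s) (2*(2*α-1))]

lemma ffun_nonneg (s : ℝ) : 0 ≤ ffun α s := Real.sqrt_nonneg _

lemma ffun_even (s : ℝ) : ffun α (-s) = ffun α s := by simp [ffun]

lemma measurable_abs_rpow (c : ℝ) : Measurable (fun s : ℝ => |s| ^ c) := by
  have h : (fun s : ℝ => |s| ^ c)
      = fun s => if s = 0 then (0:ℝ) ^ c else Real.exp (Real.log |s| * c) := by
    funext s
    by_cases h : s = 0
    · simp [h]
    · rw [if_neg h, Real.rpow_def_of_pos (abs_pos.mpr h)]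
  rw [h]
  refine Measurable.ite (by simp [MeasurableSet.singleton, Set.setOf_eq_eq_singleton])
    measurable_const ?_
  exact Real.measurable_exp.comp ((Real.measurable_log.comp measurable_abs).mul measurable_const)

lemma ffun_measurable : Measurable (ffun α) :=
  Real.continuous_sqrt.measurable.comp
    (measurable_const.add (measurable_const.mul (measurable_abs_rpow _)))

lemma sqrt_one_add_le' {y : ℝ} (hy : 0 ≤ y) : Real.sqrt (1 + y) ≤ 1 + Real.sqrt y := by
  calc Real.sqrt (1 + y) ≤ Real.sqrt ((1 + Real.sqrt y)^2) := by
        apply Real.sqrt_le_sqrt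
        nlinarith [Real.sq_sqrt hy, Real.sqrt_nonneg y]
    _ = 1 + Real.sqrt y := Real.sqrt_sq (by positivity)

lemma sqrt_abs_rpow (s : ℝ) : Real.sqrt (|s| ^ (2*(2*α-1))) = |s| ^ (2*α-1) := by
  rw [show 2*(2*α-1) = (2*α-1)*2 by ring, Real.rpow_mul (abs_nonneg s),
    Real.rpow_two, Real.sqrt_sq (Real.rpow_nonneg (abs_nonneg s) _)]

lemma ffun_le (hα0 : 0 < α) (s : ℝ) :
    ffun α s ≤ 1 + Real.sqrt (2*α) * |s| ^ (2*α-1) := by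
  rw [ffun]
  refine (sqrt_one_add_le' (by positivity)).trans ?_
  rw [Real.sqrt_mul (by linarith), sqrt_abs_rpow]

lemma ffun_intervalIntegrable (hα0 : 0 < α) (hα1 : α < 1/2) (a b : ℝ) :
    IntervalIntegrable (ffun α) volume a b := by
  suffices H : ∀ c : ℝ, 0 ≤ c → IntervalIntegrable (ffun α) volume 0 c by
    have H2 : ∀ c : ℝ, IntervalIntegrable (ffun α) volume 0 c := by
      intro c
      rcases le_total 0 c with hc | hc
      · exact H c hc
      · rw [IntervalIntegrable.iff_comp_neg, neg_zero]
        have := H (-c) (by linarith)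
        apply this.congr
        intro x _; exact (ffun_even x).symm
    exact (H2 a).symm.trans (H2 b)
  intro c hc
  have hint : IntervalIntegrable (fun x : ℝ => 1 + Real.sqrt (2*α) * x ^ (2*α-1))
      volume 0 c :=
    intervalIntegrable_const.add
      ((intervalIntegral.intervalIntegrable_rpow' (by linarith)).const_mul _)
  refine hint.mono_fun (ffun_measurable.aestronglyMeasurable) ?_
  rw [uIoc_of_le hc]
  filter_upwards [ae_restrict_mem measurableSet_Ioc] with x hx
  have hx0 : 0 < x := hx.1
  have h2 : ffun α x ≤ 1 + Real.sqrt (2*α) * x ^ (2*α-1) := by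
    have := ffun_le hα0 x
    rwa [abs_of_pos hx0] at this
  rw [norm_of_nonneg (ffun_nonneg x), Real.norm_eq_abs]
  exact h2.trans (le_abs_self _)

variable (hα0 : 0 < α) (hα1 : α < 1/2)
include hα0 hα1

lemma gfun_continuous : Continuous (gfun α) :=
  intervalIntegral.continuous_primitive (ffun_intervalIntegrable hα0 hα1) 0

omit hα0 hα1 in
lemma gfun_zero : gfun α 0 = 0 := intervalIntegral.integral_same

lemma gfun_strictMono : StrictMono (gfun α) := by
  intro u v huv
  have h1 : gfun α v - gfun α u = ∫ s in u..v, ffun α s := by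
    rw [gfun_eq α v, gfun_eq α u, ← intervalIntegral.integral_interval_sub_left
      (ffun_intervalIntegrable hα0 hα1 0 v) (ffun_intervalIntegrable hα0 hα1 0 u)]
  have h2 : v - u ≤ ∫ s in u..v, ffun α s := by
    calc v - u = ∫ _ in u..v, (1:ℝ) := by simp
      _ ≤ _ := by
        apply intervalIntegral.integral_mono_on huv.le intervalIntegrable_const
          (ffun_intervalIntegrable hα0 hα1 u v)
        intro x _; exact ffun_one_le hα0 x
  have : 0 < gfun α v - gfun α u := by rw [h1]; linarith
  linarith

omit hα0 hα1 in
lemma gfun_odd (u : ℝ) : gfun α (-u) = - gfun α u := by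
  rw [gfun_eq, gfun_eq, intervalIntegral.integral_symm,
    show (∫ s in (-u)..(0:ℝ), ffun α s) = ∫ s in (-u)..(-(0:ℝ)), ffun α s by norm_num,
    ← intervalIntegral.integral_comp_neg (fun s => ffun α s)]
  simp_rw [ffun_even]

lemma self_le_gfun {u : ℝ} (hu : 0 ≤ u) : u ≤ gfun α u := by
  rw [gfun_eq]
  calc u = ∫ _ in (0:ℝ)..u, (1:ℝ) := by simp
    _ ≤ _ := by
      apply intervalIntegral.integral_mono_on hu intervalIntegrable_const
        (ffun_intervalIntegrable hα0 hα1 0 u)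
      intro x _; exact ffun_one_le hα0 x

lemma gfun_surjective : Function.Surjective (gfun α) := by
  apply Continuous.surjective (gfun_continuous hα0 hα1)
  · apply tendsto_atTop_mono' _ _ tendsto_id
    filter_upwards [eventually_ge_atTop (0:ℝ)] with u hu
    exact self_le_gfun hα0 hα1 hu
  · rw [tendsto_atBot]
    intro b
    filter_upwards [eventually_le_atBot (min b 0 : ℝ)] with u hu
    have h0 : u ≤ 0 := hu.trans (min_le_right _ _)
    have : -u ≤ gfun α (-u) := self_le_gfun hα0 hα1 (by linarith)
    rw [gfun_odd] at this
    have : gfun α u ≤ u := by linarith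
    exact this.trans (hu.trans (min_le_left _ _))

lemma gfun_bijective : Function.Bijective (gfun α) :=
  ⟨(gfun_strictMono hα0 hα1).injective, gfun_surjective hα0 hα1⟩

lemma gfun_lower {u : ℝ} (hu : 0 ≤ u) :
    Real.sqrt (2*α) / (2*α) * u ^ (2*α) ≤ gfun α u := by
  rw [gfun_eq]
  have key : ∀ x ∈ Set.Icc (0:ℝ) u, Real.sqrt (2*α) * x ^ (2*α-1) ≤ ffun α x := by
    intro x hx
    rw [ffun]
    have : Real.sqrt (2*α) * x ^ (2*α-1) = Real.sqrt (2*α * |x| ^ (2*(2*α-1))) := by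
      rw [Real.sqrt_mul (show (0:ℝ) ≤ 2*α by linarith) (|x| ^ (2*(2*α-1))),
        sqrt_abs_rpow, abs_of_nonneg hx.1]
    rw [this]
    apply Real.sqrt_le_sqrt
    nlinarith [Real.rpow_nonneg (abs_nonneg x) (2*(2*α-1))]
  calc Real.sqrt (2*α) / (2*α) * u ^ (2*α)
      = ∫ x in (0:ℝ)..u, Real.sqrt (2*α) * x ^ (2*α-1) := by
        rw [intervalIntegral.integral_const_mul, integral_rpow (Or.inl (by linarith))]
        rw [show 2*α - 1 + 1 = 2*α by ring, Real.zero_rpow (by positivity)]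
        ring
    _ ≤ _ := by
        apply intervalIntegral.integral_mono_on hu
          ((intervalIntegral.intervalIntegrable_rpow' (by linarith)).const_mul _)
          (ffun_intervalIntegrable hα0 hα1 0 u) key

lemma hfun_rightInv (t : ℝ) : gfun α (Function.invFun (gfun α) t) = t :=
  Function.rightInverse_invFun (gfun_surjective hα0 hα1) t

lemma hfun_leftInv (u : ℝ) : Function.invFun (gfun α) (gfun α u) = u :=
  Function.leftInverse_invFun (gfun_bijective hα0 hα1).1 u

lemma hfun_zero : Function.invFun (gfun α) 0 = 0 := by
  conv_lhs => rw [← gfun_zero (α := α)]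
  exact hfun_leftInv hα0 hα1 0

lemma hfun_continuous : Continuous (Function.invFun (gfun α)) := by
  have heq : Function.invFun (gfun α) = ⇑(StrictMono.orderIsoOfSurjective (gfun α)
      (gfun_strictMono hα0 hα1) (gfun_surjective hα0 hα1)).symm := by
    funext t
    apply (gfun_bijective hα0 hα1).1
    rw [hfun_rightInv hα0 hα1,
      StrictMono.orderIsoOfSurjective_self_symm_apply (gfun α) (gfun_strictMono hα0 hα1)]
  rw [heq]
  exact OrderIso.continuous _

lemma hfun_odd (t : ℝ) :
    Function.invFun (gfun α) (-t) = - Function.invFun (gfun α) t := by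
  apply (gfun_bijective hα0 hα1).1
  rw [hfun_rightInv hα0 hα1, gfun_odd, hfun_rightInv hα0 hα1]

lemma hfun_pos {t : ℝ} (ht : 0 < t) : 0 < Function.invFun (gfun α) t := by
  by_contra h
  push_neg at h
  have := (gfun_strictMono hα0 hα1).monotone h
  rw [hfun_rightInv hα0 hα1, gfun_zero] at this
  linarith

lemma hfun_ne_zero {t : ℝ} (ht : t ≠ 0) : Function.invFun (gfun α) t ≠ 0 := by
  intro h
  apply ht
  rw [← hfun_rightInv hα0 hα1 (α := α) t, h, gfun_zero]

omit hα0 hα1 in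
lemma ffun_continuousAt {u : ℝ} (hu : u ≠ 0) : ContinuousAt (ffun α) u := by
  apply Real.continuous_sqrt.continuousAt.comp
  apply ContinuousAt.add continuousAt_const
  apply ContinuousAt.mul continuousAt_const
  exact (Real.continuousAt_rpow_const |u| _ (Or.inl (abs_ne_zero.mpr hu))).comp
    continuous_abs.continuousAt

lemma gfun_hasDerivAt {u : ℝ} (hu : u ≠ 0) : HasDerivAt (gfun α) (ffun α u) u := by
  apply intervalIntegral.integral_hasDerivAt_right (ffun_intervalIntegrable hα0 hα1 0 u)
    ffun_measurable.stronglyMeasurable.stronglyMeasurableAtFilter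
    (ffun_continuousAt hu)

lemma hfun_hasDerivAt {t : ℝ} (ht : t ≠ 0) :
    HasDerivAt (Function.invFun (gfun α)) (ffun α (Function.invFun (gfun α) t))⁻¹ t := by
  have hne : Function.invFun (gfun α) t ≠ 0 := hfun_ne_zero hα0 hα1 ht
  apply HasDerivAt.of_local_left_inverse (hfun_continuous hα0 hα1).continuousAt
    (gfun_hasDerivAt hα0 hα1 hne) (by linarith [ffun_one_le hα0 (Function.invFun (gfun α) t)])
  filter_upwards with y using hfun_rightInv hα0 hα1 y

lemma deriv_hfun {t : ℝ} (ht : t ≠ 0) :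
    deriv (Function.invFun (gfun α)) t = (ffun α (Function.invFun (gfun α) t))⁻¹ :=
  (hfun_hasDerivAt hα0 hα1 ht).deriv

lemma deriv_hfun_eq {t : ℝ} (ht : t ≠ 0) :
    deriv (Function.invFun (gfun α)) t
      = (1 + 2*α * |Function.invFun (gfun α) t| ^ (2*(2*α-1))) ^ (-(1/2) : ℝ) := by
  rw [deriv_hfun hα0 hα1 ht, ffun]
  set x := 1 + 2*α * |Function.invFun (gfun α) t| ^ (2*(2*α-1)) with hx
  have hx0 : 0 ≤ x := by
    have := Real.rpow_nonneg (abs_nonneg (Function.invFun (gfun α) t)) (2*(2*α-1))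
    nlinarith
  rw [Real.sqrt_eq_rpow, ← Real.rpow_neg hx0]

lemma hfun_abs (t : ℝ) :
    |Function.invFun (gfun α) t| = Function.invFun (gfun α) |t| := by
  rcases lt_trichotomy t 0 with ht | rfl | ht
  · have hodd := hfun_odd hα0 hα1 t
    have hpos := hfun_pos hα0 hα1 (show 0 < -t by linarith)
    have hneg : Function.invFun (gfun α) t < 0 := by linarith
    rw [abs_of_neg ht, abs_of_neg hneg, hfun_odd hα0 hα1 t]
  · simp [hfun_zero hα0 hα1]
  · rw [abs_of_pos ht, abs_of_pos (hfun_pos hα0 hα1 ht)]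

lemma hfun_upper {t : ℝ} (ht : 0 ≤ t) :
    Function.invFun (gfun α) t ≤ (t / (Real.sqrt (2*α) / (2*α))) ^ (2*α)⁻¹ := by
  set c := Real.sqrt (2*α) / (2*α) with hc
  have hcpos : 0 < c := by positivity
  set u := Function.invFun (gfun α) t with hu
  have hu0 : 0 ≤ u := by
    rcases eq_or_lt_of_le ht with h | h
    · rw [hu, ← h, hfun_zero hα0 hα1]
    · exact (hfun_pos hα0 hα1 h).le
  have h1 : c * u ^ (2*α) ≤ t := by
    have := gfun_lower hα0 hα1 hu0
    rwa [hfun_rightInv hα0 hα1] at this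
  have h2 : u ^ (2*α) ≤ t / c := (le_div_iff₀' hcpos).mpr h1
  calc u = (u ^ (2*α)) ^ (2*α)⁻¹ := by
        rw [← Real.rpow_mul hu0, mul_inv_cancel₀ (by linarith : 2*α ≠ 0), Real.rpow_one]
    _ ≤ (t / c) ^ (2*α)⁻¹ :=
        Real.rpow_le_rpow (Real.rpow_nonneg hu0 _) h2 (by positivity)

lemma hfun_hasDerivAt_zero : HasDerivAt (Function.invFun (gfun α)) 0 0 := by
  rw [hasDerivAt_iff_tendsto_slope]
  set c := Real.sqrt (2*α) / (2*α) with hc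
  have hcpos : 0 < c := by positivity
  set q := (2*α)⁻¹ with hq
  have hq1 : 1 < q := by
    rw [hq]
    exact (one_lt_inv₀ (by linarith)).2 (by linarith)
  apply squeeze_zero_norm' (a := fun t => c ^ (-q) * |t| ^ (q - 1))
  · filter_upwards [self_mem_nhdsWithin] with t (ht : t ≠ 0)
    have habs : 0 < |t| := abs_pos.mpr ht
    rw [slope_def_field, hfun_zero hα0 hα1, sub_zero, sub_zero]
    rw [norm_div, Real.norm_eq_abs, Real.norm_eq_abs, hfun_abs hα0 hα1]
    have h1 : Function.invFun (gfun α) |t| ≤ (|t| / c) ^ q := hfun_upper hα0 hα1 habs.le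
    have h2 : (|t| / c) ^ q = c ^ (-q) * |t| ^ q := by
      rw [Real.div_rpow (abs_nonneg t) hcpos.le, Real.rpow_neg hcpos.le]
      ring
    have h3 : c ^ (-q) * |t| ^ (q - 1) = c ^ (-q) * |t| ^ q / |t| := by
      rw [Real.rpow_sub habs, Real.rpow_one]; ring
    rw [h3]
    exact div_le_div_of_nonneg_right (h1.trans_eq h2) habs.le
  · have : ContinuousAt (fun t : ℝ => c ^ (-q) * |t| ^ (q - 1)) 0 := by
      apply ContinuousAt.mul continuousAt_const
      exact (Real.continuousAt_rpow_const |(0:ℝ)| (q-1) (Or.inr (by linarith))).comp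
        continuous_abs.continuousAt
    have h2 := this.tendsto.mono_left (nhdsWithin_le_nhds (s := {(0:ℝ)}ᶜ))
    simpa [abs_zero, Real.zero_rpow (show q - 1 ≠ 0 by linarith)] using h2

lemma hfun_differentiable : Differentiable ℝ (Function.invFun (gfun α)) := by
  intro t
  rcases eq_or_ne t 0 with rfl | ht
  · exact (hfun_hasDerivAt_zero hα0 hα1).differentiableAt
  · exact (hfun_hasDerivAt hα0 hα1 ht).differentiableAt

lemma deriv_hfun_zero : deriv (Function.invFun (gfun α)) 0 = 0 :=
  (hfun_hasDerivAt_zero hα0 hα1).deriv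

omit hα1 in
lemma ffun_lower {u : ℝ} (hu : u ≠ 0) :
    Real.sqrt (2*α) * |u| ^ (2*α-1) ≤ ffun α u := by
  rw [ffun, ← sqrt_abs_rpow (α := α), ← Real.sqrt_mul (by linarith : (0:ℝ) ≤ 2*α)]
  apply Real.sqrt_le_sqrt
  linarith

lemma deriv_hfun_nonneg (t : ℝ) : 0 ≤ deriv (Function.invFun (gfun α)) t := by
  rcases eq_or_ne t 0 with rfl | ht
  · rw [deriv_hfun_zero hα0 hα1]
  · rw [deriv_hfun hα0 hα1 ht]
    have := ffun_one_le hα0 (Function.invFun (gfun α) t)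
    positivity

lemma deriv_hfun_le (t : ℝ) :
    deriv (Function.invFun (gfun α)) t
      ≤ (Real.sqrt (2*α))⁻¹ * |Function.invFun (gfun α) t| ^ (1-2*α) := by
  rcases eq_or_ne t 0 with rfl | ht
  · rw [deriv_hfun_zero hα0 hα1, hfun_zero hα0 hα1, abs_zero,
      Real.zero_rpow (by linarith : 1-2*α ≠ 0), mul_zero]
  · set u := Function.invFun (gfun α) t with hu
    have hune : u ≠ 0 := hfun_ne_zero hα0 hα1 ht
    have habs : 0 < |u| := abs_pos.mpr hune
    have h1 : Real.sqrt (2*α) * |u| ^ (2*α-1) ≤ ffun α u := ffun_lower hα0 hune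
    have hpos : 0 < Real.sqrt (2*α) * |u| ^ (2*α-1) := by
      have := Real.rpow_pos_of_pos habs (2*α-1)
      have h2α : (0:ℝ) < Real.sqrt (2*α) := Real.sqrt_pos.mpr (by linarith)
      positivity
    rw [deriv_hfun hα0 hα1 ht, ← hu]
    calc (ffun α u)⁻¹ ≤ (Real.sqrt (2*α) * |u| ^ (2*α-1))⁻¹ :=
          inv_anti₀ hpos h1
      _ = (Real.sqrt (2*α))⁻¹ * |u| ^ (1-2*α) := by
          rw [mul_inv, ← Real.rpow_neg habs.le]
          norm_num

lemma deriv_hfun_continuous : Continuous (deriv (Function.invFun (gfun α))) := by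
  rw [continuous_iff_continuousAt]
  intro t
  rcases eq_or_ne t 0 with rfl | ht
  · rw [ContinuousAt, deriv_hfun_zero hα0 hα1]
    apply squeeze_zero (deriv_hfun_nonneg hα0 hα1) (deriv_hfun_le hα0 hα1)
    have hc : ContinuousAt
        (fun t => (Real.sqrt (2*α))⁻¹ * |Function.invFun (gfun α) t| ^ (1-2*α)) 0 := by
      apply ContinuousAt.mul continuousAt_const
      exact ((Real.continuousAt_rpow_const _ (1-2*α) (Or.inr (by linarith))).comp
        ((continuous_abs.comp (hfun_continuous hα0 hα1)).continuousAt))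
    have := hc.tendsto
    simpa [hfun_zero hα0 hα1, Real.zero_rpow (show 1-2*α ≠ 0 by linarith)] using this
  · have hψ : ContinuousAt (fun t => (ffun α (Function.invFun (gfun α) t))⁻¹) t := by
      apply ContinuousAt.inv₀
      · exact (ffun_continuousAt (hfun_ne_zero hα0 hα1 ht)).comp
          (hfun_continuous hα0 hα1).continuousAt
      · have := ffun_one_le hα0 (Function.invFun (gfun α) t)
        linarith
    apply hψ.congr
    filter_upwards [eventually_ne_nhds ht] with y hy
    exact (deriv_hfun hα0 hα1 hy).symm

lemma hfun_contDiff : ContDiff ℝ 1 (Function.invFun (gfun α)) :=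
  contDiff_one_iff_deriv.mpr
    ⟨hfun_differentiable hα0 hα1, deriv_hfun_continuous hα0 hα1⟩

end Aux

theorem stmt1 (α : ℝ) (hα0 : 0 < α) (hα1 : α < 1/2) :
    Function.Bijective (gfun α) ∧ StrictMono (gfun α) ∧
    (∀ u : ℝ, gfun α (-u) = - gfun α u) ∧
    ContDiff ℝ 1 (Function.invFun (gfun α)) ∧
    ∀ t : ℝ, t ≠ 0 →
      deriv (Function.invFun (gfun α)) t
        = (1 + 2*α * |Function.invFun (gfun α) t| ^ (2*(2*α-1))) ^ (-(1/2) : ℝ) := by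
  exact ⟨gfun_bijective hα0 hα1, gfun_strictMono hα0 hα1, gfun_odd,
    hfun_contDiff hα0 hα1, fun t ht => deriv_hfun_eq hα0 hα1 ht⟩
end

section
/- Let 0 < α < 1/2 (with κα = 1, so 2κα² = 2α) and h as above. Then for every a ∈ [2α, 1] and every t ≠ 0: |(d/dt)(|h(t)|^a)|² ≤ (1/(2α))·1, i.e. the derivative of |h|^a at t has square at most 1/(2α) times 1 (more precisely, if v is differentiable then |∇(|h(v)|^a)|² ≤ (1/(2α))|∇v|²). -/
/-!
Write `ψ u = |u| ^ a`, so that `|h| ^ a = ψ ∘ h` and, `h` being the inverse of `g = gfun α`, it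
suffices to show `|ψ u - ψ w| ≤ (2α)^(-1/2) |g u - g w|`. For `0 ≤ w ≤ u` this follows from the
derivative bound `a u^(a-1) ≤ (2α)^(-1/2) g'(u) = √(1/(2α) + u^(2(2α-1)))`, true because `u^(2a-2)`
lies between `u^(2(2α-1))` and `1 ≤ 1/(2α)`; the other sign patterns reduce to this one since `ψ` is
even and `g` is odd. Hence `|h| ^ a` is `(2α)^(-1/2)`-Lipschitz, which bounds its derivative and,
along any differentiable `v`, the derivative of `|h ∘ v| ^ a`.
-/

open Real Filter MeasureTheory Set

open scoped NNReal

section Lipschitz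

variable {𝕜 E F G : Type*} [NontriviallyNormedField 𝕜] [NormedAddCommGroup E] [NormedSpace 𝕜 E]
  [NormedAddCommGroup F] [NormedSpace 𝕜 F] [NormedAddCommGroup G] [NormedSpace 𝕜 G]

theorem norm_fderiv_comp_le_of_lipschitzWith {f : F → G} {K : ℝ≥0} (hf : LipschitzWith K f)
    {v : E → F} {x : E} (hv : DifferentiableAt 𝕜 v x) :
    ‖fderiv 𝕜 (f ∘ v) x‖ ≤ K * ‖fderiv 𝕜 v x‖ := by
  set D := fderiv 𝕜 v x
  have hbound : ∀ c ∈ Ioi ‖D‖, ‖fderiv 𝕜 (f ∘ v) x‖ ≤ K * c := by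
    intro c hc
    refine norm_fderiv_le_of_lip' 𝕜 (mul_nonneg K.2 ((norm_nonneg D).trans hc.out.le)) ?_
    filter_upwards [hv.hasFDerivAt.isLittleO.def (sub_pos.2 hc)] with y hy
    have hv_lip : ‖v y - v x‖ ≤ c * ‖y - x‖ := by
      have := norm_sub_norm_le (v y - v x) (D (y - x))
      have := D.le_opNorm (y - x)
      nlinarith
    calc ‖f (v y) - f (v x)‖ ≤ K * ‖v y - v x‖ := hf.norm_sub_le _ _
      _ ≤ K * (c * ‖y - x‖) := by gcongr
      _ = K * c * ‖y - x‖ := by ring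
  exact ge_of_tendsto (((continuous_const_mul (K : ℝ)).tendsto _).mono_left nhdsWithin_le_nhds)
    (eventually_nhdsWithin_of_forall hbound)

end Lipschitz

theorem intervalIntegrable_abs_rpow {r : ℝ} (hr : -1 < r) (a b : ℝ) :
    IntervalIntegrable (fun x : ℝ => |x| ^ r) volume a b := by
  have := (intervalIntegral.intervalIntegrable_cpow' (a := a) (b := b) (r := r)
    (by simpa using hr)).norm
  simpa [Complex.norm_cpow_real] using this

theorem abs_sub_le_abs_sub_of_odd {ψ g : ℝ → ℝ} (hg : g.Odd) (hψ : MonotoneOn ψ (Ici 0))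
    (hgψ : MonotoneOn (g - ψ) (Ici 0)) (u w : ℝ) : |ψ (|u|) - ψ (|w|)| ≤ |g u - g w| := by
  have nonneg : ∀ {w u : ℝ}, 0 ≤ w → w ≤ u → |ψ u - ψ w| ≤ |g u - g w| := by
    intro w u hw hwu
    have h1 : ψ w ≤ ψ u := hψ hw (hw.trans hwu) hwu
    have h2 : g w - ψ w ≤ g u - ψ u := hgψ hw (hw.trans hwu) hwu
    rw [abs_of_nonneg (by linarith), abs_of_nonneg (by linarith)]
    linarith
  wlog hwu : w ≤ u generalizing u w
  · rw [abs_sub_comm, abs_sub_comm (g u)]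
    exact this w u (le_of_not_ge hwu)
  rcases le_total 0 w with hw | hw
  · rw [abs_of_nonneg hw, abs_of_nonneg (hw.trans hwu)]
    exact nonneg hw hwu
  rcases le_total u 0 with hu | hu
  · have := nonneg (neg_nonneg.2 hu) (neg_le_neg hwu)
    rwa [hg, hg, neg_sub_neg, ← abs_of_nonpos hw, ← abs_of_nonpos hu, abs_sub_comm] at this
  · -- the two sides are compared with the value at `0`, where `g` vanishes
    have hg0 : g 0 = 0 := hg.map_zero
    have hnw : (0 : ℝ) ≤ -w := neg_nonneg.2 hw
    have h1 : ψ 0 ≤ ψ u := hψ self_mem_Ici hu hu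
    have h2 : g 0 - ψ 0 ≤ g u - ψ u := hgψ self_mem_Ici hu hu
    have h3 : ψ 0 ≤ ψ (-w) := hψ self_mem_Ici hnw hnw
    have h4 : g 0 - ψ 0 ≤ g (-w) - ψ (-w) := hgψ self_mem_Ici hnw hnw
    rw [hg] at h4
    rw [abs_of_nonneg hu, abs_of_nonpos hw, abs_sub_le_iff, abs_of_nonneg (by linarith)]
    constructor <;> linarith

section gfun

variable {α a : ℝ}

noncomputable def gfunIntegrand (α s : ℝ) : ℝ := √(1 + 2 * α * |s| ^ (2 * (2 * α - 1)))

theorem measurable_gfunIntegrand (α : ℝ) : Measurable (gfunIntegrand α) := by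
  unfold gfunIntegrand; fun_prop

theorem continuousAt_gfunIntegrand (α : ℝ) {u : ℝ} (hu : u ≠ 0) :
    ContinuousAt (gfunIntegrand α) u := by
  unfold gfunIntegrand; fun_prop (disch := exact Or.inl (abs_ne_zero.2 hu))

theorem gfunIntegrand_le (hα : 0 ≤ α) (s : ℝ) :
    gfunIntegrand α s ≤ 1 + √(2 * α) * |s| ^ (2 * α - 1) := by
  have hsq : |s| ^ (2 * (2 * α - 1)) = (|s| ^ (2 * α - 1)) ^ 2 := by
    rw [← rpow_mul_natCast (abs_nonneg s), mul_comm]; norm_num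
  have h2α := sq_sqrt (by linarith : 0 ≤ 2 * α)
  have hnn : 0 ≤ √(2 * α) * |s| ^ (2 * α - 1) := by positivity
  rw [gfunIntegrand, sqrt_le_left (by positivity), hsq]
  nlinarith

theorem intervalIntegrable_gfunIntegrand (hα : 0 < α) (a b : ℝ) :
    IntervalIntegrable (gfunIntegrand α) volume a b := by
  refine ((intervalIntegrable_const (c := 1)).add
    ((intervalIntegrable_abs_rpow (r := 2 * α - 1) (by linarith) a b).const_mul √(2 * α))).mono_fun
    (measurable_gfunIntegrand α).aestronglyMeasurable (Eventually.of_forall fun s => ?_)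
  simp only [Real.norm_eq_abs]
  exact (abs_of_nonneg (sqrt_nonneg _)).trans_le ((gfunIntegrand_le hα.le s).trans (le_abs_self _))

theorem continuous_gfun (hα : 0 < α) : Continuous (gfun α) :=
  intervalIntegral.continuous_primitive (intervalIntegrable_gfunIntegrand hα) 0

theorem hasDerivAt_gfun (hα : 0 < α) {u : ℝ} (hu : u ≠ 0) :
    HasDerivAt (gfun α) (gfunIntegrand α u) u :=
  intervalIntegral.integral_hasDerivAt_right (intervalIntegrable_gfunIntegrand hα 0 u)
    (measurable_gfunIntegrand α).aestronglyMeasurable.stronglyMeasurableAtFilter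
    (continuousAt_gfunIntegrand α hu)

theorem gfun_neg (α u : ℝ) : gfun α (-u) = -gfun α u := by
  have := intervalIntegral.integral_comp_neg (a := u) (b := 0) (gfunIntegrand α)
  simp only [gfunIntegrand, abs_neg, neg_zero] at this
  rw [gfun, gfun, ← this, intervalIntegral.integral_symm]

theorem rpow_two_mul_sub_two_le (hα : 0 < α) (ha : 2 * α ≤ a) (ha1 : a ≤ 1) {x : ℝ} (hx : 0 < x) :
    x ^ (2 * a - 2) ≤ 1 / (2 * α) + x ^ (2 * (2 * α - 1)) := by
  rcases le_total x 1 with hx1 | hx1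
  · have := rpow_le_rpow_of_exponent_ge hx hx1 (by linarith : 2 * (2 * α - 1) ≤ 2 * a - 2)
    have : 0 ≤ 1 / (2 * α) := by positivity
    linarith
  · have := rpow_le_one_of_one_le_of_nonpos hx1 (by linarith : 2 * a - 2 ≤ 0)
    have : 1 ≤ 1 / (2 * α) := by rw [le_div_iff₀ (by positivity)]; linarith
    have := rpow_nonneg hx.le (2 * (2 * α - 1))
    linarith

theorem mul_rpow_sub_one_le_gfunIntegrand (hα : 0 < α) (ha : 2 * α ≤ a) (ha1 : a ≤ 1) {x : ℝ}
    (hx : 0 < x) :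
    a * x ^ (a - 1) ≤ √(1 / (2 * α)) * gfunIntegrand α x := by
  have ha0 : 0 ≤ a := by linarith
  rw [gfunIntegrand, abs_of_pos hx, ← sqrt_mul (by positivity),
    le_sqrt (by positivity) (by positivity)]
  calc (a * x ^ (a - 1)) ^ 2 = a ^ 2 * x ^ (2 * a - 2) := by
        rw [mul_pow, ← rpow_mul_natCast hx.le]; ring_nf
    _ ≤ 1 * x ^ (2 * a - 2) := by gcongr; nlinarith
    _ ≤ 1 / (2 * α) + x ^ (2 * (2 * α - 1)) := by
        rw [one_mul]; exact rpow_two_mul_sub_two_le hα ha ha1 hx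
    _ = 1 / (2 * α) * (1 + 2 * α * x ^ (2 * (2 * α - 1))) := by field_simp

theorem monotoneOn_sqrt_mul_gfun_sub_rpow (hα : 0 < α) (ha : 2 * α ≤ a) (ha1 : a ≤ 1) :
    MonotoneOn (fun u => √(1 / (2 * α)) * gfun α u - u ^ a) (Ici 0) := by
  have ha0 : 0 < a := by linarith
  refine monotoneOn_of_hasDerivWithinAt_nonneg (convex_Ici 0)
    (f' := fun u => √(1 / (2 * α)) * gfunIntegrand α u - a * u ^ (a - 1)) ?_ ?_ ?_
  · exact ((continuous_gfun hα).const_mul _).continuousOn.sub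
      (continuousOn_id.rpow_const fun _ _ => Or.inr ha0.le)
  · rw [interior_Ici]
    intro u (hu : 0 < u)
    exact (((hasDerivAt_gfun hα hu.ne').const_mul _).sub
      (hasDerivAt_rpow_const (Or.inl hu.ne'))).hasDerivWithinAt
  · rw [interior_Ici]
    intro u (hu : 0 < u)
    exact sub_nonneg.2 (mul_rpow_sub_one_le_gfunIntegrand hα ha ha1 hu)

theorem abs_sub_abs_rpow_le (hα : 0 < α) (ha : 2 * α ≤ a) (ha1 : a ≤ 1) (u w : ℝ) :
    |(|u| ^ a) - |w| ^ a| ≤ √(1 / (2 * α)) * |gfun α u - gfun α w| := by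
  have := abs_sub_le_abs_sub_of_odd (ψ := fun u => u ^ a)
    (g := fun u => √(1 / (2 * α)) * gfun α u)
    (fun u => by simp only [gfun_neg, mul_neg])
    (fun _ hx _ _ hxy => rpow_le_rpow hx hxy (by linarith))
    (monotoneOn_sqrt_mul_gfun_sub_rpow hα ha ha1) u w
  rwa [← mul_sub, abs_mul, abs_of_nonneg (sqrt_nonneg _)] at this

theorem lipschitzWith_abs_rpow_comp (hα : 0 < α) {h : ℝ → ℝ}
    (hh : Function.RightInverse h (gfun α)) (ha : 2 * α ≤ a) (ha1 : a ≤ 1) :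
    LipschitzWith (√(1 / (2 * α))).toNNReal (fun t => |h t| ^ a) :=
  LipschitzWith.of_dist_le' fun s t => by
    simpa only [Real.dist_eq, hh s, hh t] using abs_sub_abs_rpow_le hα ha ha1 (h s) (h t)

end gfun

theorem stmt11_general (α : ℝ) (hα0 : 0 < α) (h : ℝ → ℝ)
    (hinv2 : Function.RightInverse h (gfun α)) :
    ∀ a : ℝ, 2*α ≤ a → a ≤ 1 →
      (∀ t : ℝ, t ≠ 0 → (deriv (fun t : ℝ => |h t| ^ a) t)^2 ≤ (1/(2*α)) * 1) ∧
      (∀ (n : ℕ) (v : EuclideanSpace ℝ (Fin n) → ℝ) (x : EuclideanSpace ℝ (Fin n)),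
        DifferentiableAt ℝ v x →
        ‖fderiv ℝ (fun y => |h (v y)| ^ a) x‖^2 ≤ (1/(2*α)) * ‖fderiv ℝ v x‖^2) := by
  intro a ha ha1
  have hlip := lipschitzWith_abs_rpow_comp hα0 hinv2 ha ha1
  have hK : ((√(1 / (2 * α))).toNNReal : ℝ) ^ 2 = 1 / (2 * α) := by
    rw [Real.coe_toNNReal _ (sqrt_nonneg _), sq_sqrt (by positivity)]
  refine ⟨fun t _ => ?_, fun n v x hv => ?_⟩
  · rw [mul_one, ← hK, ← sq_abs, ← Real.norm_eq_abs]
    exact pow_le_pow_left₀ (norm_nonneg _) (norm_deriv_le_of_lipschitz hlip) 2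
  · rw [← hK, ← mul_pow]
    exact pow_le_pow_left₀ (norm_nonneg _) (norm_fderiv_comp_le_of_lipschitzWith hlip hv) 2

theorem stmt11 (α : ℝ) (hα0 : 0 < α) (hα1 : α < 1/2) (h : ℝ → ℝ)
    (hinv1 : Function.LeftInverse h (gfun α)) (hinv2 : Function.RightInverse h (gfun α)) :
    ∀ a : ℝ, 2*α ≤ a → a ≤ 1 →
      (∀ t : ℝ, t ≠ 0 → (deriv (fun t : ℝ => |h t| ^ a) t)^2 ≤ (1/(2*α)) * 1) ∧
      (∀ (n : ℕ) (v : EuclideanSpace ℝ (Fin n) → ℝ) (x : EuclideanSpace ℝ (Fin n)),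
        DifferentiableAt ℝ v x →
        ‖fderiv ℝ (fun y => |h (v y)| ^ a) x‖^2 ≤ (1/(2*α)) * ‖fderiv ℝ v x‖^2) :=
  stmt11_general α hα0 h hinv2
end

section
/- Let 0 < α < 1/2 (with 2κα² = 2α) and h as above, and set a₀ = (1+(2α)²)/(1+2α). Then 2α < a₀ < 1, and for every a ∈ [a₀, 1] and every s > 0: s^{2(a-2α)}/(2α + s^{2(1-2α)}) ≤ 1. -/
/-!
Write `β = 2α` and `t = s ^ (2(1-β))`, so that the numerator is `t ^ p` with
`p = (a - β)/(1 - β) ∈ [0, 1]`. Concavity of `t ↦ t ^ p` (Bernoulli) gives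
`t ^ p ≤ (1 - p) + p t ≤ (1 - p) + t`, and `a ≥ a₀` forces `1 - p ≤ β`, so the
numerator is at most the denominator `β + t`.
-/

open Real

lemma rpow_le_one_sub_add_mul {t p : ℝ} (ht : 0 ≤ t) (hp0 : 0 ≤ p) (hp1 : p ≤ 1) :
    t ^ p ≤ (1 - p) + p * t := by
  have h := rpow_one_add_le_one_add_mul_self (s := t - 1) (by linarith) hp0 hp1
  rw [add_sub_cancel] at h
  linarith

lemma rpow_le_add_of_one_sub_le {t p c : ℝ} (ht : 0 ≤ t) (hp0 : 0 ≤ p) (hp1 : p ≤ 1)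
    (hc : 1 - p ≤ c) : t ^ p ≤ c + t := by
  have := rpow_le_one_sub_add_mul ht hp0 hp1
  nlinarith

lemma rpow_div_add_rpow_le_one {β a s : ℝ} (hβ1 : β < 1) (hβa : β ≤ a) (ha1 : a ≤ 1)
    (ha : 1 - a ≤ β * (1 - β)) (hs : 0 < s) :
    s ^ (2 * (a - β)) / (β + s ^ (2 * (1 - β))) ≤ 1 := by
  have hβ1' : 0 < 1 - β := by linarith
  set p := (a - β) / (1 - β)
  have hpow : s ^ (2 * (a - β)) = (s ^ (2 * (1 - β))) ^ p := by
    rw [← rpow_mul hs.le]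
    congr 1
    unfold p
    field_simp
  have hp0 : 0 ≤ p := div_nonneg (by linarith) hβ1'.le
  have hp1 : p ≤ 1 := (div_le_one hβ1').2 (by linarith)
  have hc : 1 - p ≤ β := by
    rw [one_sub_div hβ1'.ne', div_le_iff₀ hβ1']
    linarith
  have hβ0 : 0 ≤ β := by nlinarith
  rw [div_le_one (by positivity), hpow]
  exact rpow_le_add_of_one_sub_le (rpow_nonneg hs.le _) hp0 hp1 hc

theorem stmt12 (α : ℝ) (hα0 : 0 < α) (hα1 : α < 1/2) :
    2*α < (1+(2*α)^2)/(1+2*α) ∧ (1+(2*α)^2)/(1+2*α) < 1 ∧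
    ∀ a : ℝ, (1+(2*α)^2)/(1+2*α) ≤ a → a ≤ 1 → ∀ s : ℝ, 0 < s →
      s ^ (2*(a-2*α)) / (2*α + s ^ (2*(1-2*α))) ≤ 1 := by
  have hd : (0:ℝ) < 1 + 2*α := by linarith
  refine ⟨by rw [lt_div_iff₀ hd]; nlinarith, by rw [div_lt_iff₀ hd]; nlinarith, ?_⟩
  intro a ha₀ ha1 s hs
  rw [div_le_iff₀ hd] at ha₀
  -- `a₀ ≥ 1 - 2α + 4α²` because `(1 - 2α + 4α²)(1 + 2α) = 1 + 8α³ ≤ 1 + 4α²`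
  exact rpow_div_add_rpow_le_one (by linarith) (by nlinarith) ha1 (by nlinarith) hs
end
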